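/- For real numbers x, y and p, with q = x, m = (p + q)/2 and s = (3/2)x - (1/2)y, we have (3/2)x³ - (1/2)y³ - (1/4)(p² + q²)(p + q) = -(3/8)(5x + y)(x - y)² - (1/8)(p + q)(p - q)² - (1/2)(m² + m·s + s²)(p - 2x + y). -/
import Mathlib

theorem stmt_4 (p q x y m s : ℝ) (hq : q = x)
    (hm : m = (p + q) / 2) (hs : s = (3/2 : ℝ) * x - (1/2 : ℝ) * y) :
    (3/2 : ℝ) * x^3 - (1/2 : ℝ) * y^3 - (1/4 : ℝ) * (p^2 + q^2) * (p + q) =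
      -(3/8 : ℝ) * (5*x + y) * (x - y)^2
        - (1/8 : ℝ) * (p + q) * (p - q)^2
        - (1/2 : ℝ) * (m^2 + m*s + s^2) * (p - 2*x + y) := by
  subst hq hm hs; ring
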